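/- The lazy symmetric random walk on ℤ which at each step moves +1 with probability p, −1 with probability p, and stays put with probability 1 − 2p (where 0 < p ≤ 1/2) is recurrent; in particular, started from any m ≥ 0, it reaches 0 almost surely. -/

import Mathlib

/-! The steps have mean zero and lie in `{-1, 0, 1}`, so the partial sums form a martingale with
bounded increments, and almost surely such a martingale either converges or is unbounded both above
and below. It cannot converge, because by the second Borel–Cantelli lemma the walk makes infinitely
many nonzero integer steps. A walk with steps in `{-1, 0, 1}` that is unbounded in both directions
visits every integer infinitely often. -/

open MeasureTheory ProbabilityTheory

namespace RSKpaper

/-- Insert a letter into a row (Schensted row insertion); returns the new row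
and the bumped letter, if any. -/
def rowInsert (r : List ℕ) (a : ℕ) : List ℕ × Option ℕ :=
  match r.findIdx? (fun b => decide (a < b)) with
  | none => (r ++ [a], none)
  | some i => (r.set i a, r[i]?)

/-- Insert a letter into a tableau (list of rows). -/
def tabInsert : List (List ℕ) → ℕ → List (List ℕ)
  | [], a => [[a]]
  | r :: rs, a =>
    match rowInsert r a with
    | (r', none) => r' :: rs
    | (r', some b) => r' :: tabInsert rs b

/-- The RSK insertion tableau `P(w)` of a word. -/
def Ptab (w : List ℕ) : List (List ℕ) := w.foldl tabInsert ([] : List (List ℕ))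

/-- The shape of the RSK tableaux of a word, as the list of row lengths. -/
def shape (w : List ℕ) : List ℕ := (Ptab w).map List.length

/-- The RSK recording tableau `Q(w)`: the entry `i+1` is placed in the row in
which the shape grows when the `(i+1)`-st letter is inserted. -/
def Qtab (w : List ℕ) : List (List ℕ) :=
  (List.range w.length).foldl (fun q i =>
    let s1 := shape (w.take i)
    let s2 := shape (w.take (i + 1))
    let j := (List.range s2.length).findIdx
      (fun r => decide (s2.getD r 0 ≠ s1.getD r 0))
    if j < q.length then q.set j (q.getD j ([] : List ℕ) ++ [i + 1]) else q ++ [[i + 1]]) ([] : List (List ℕ))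

/-- Iterated bracketing of factors `21` in a two–letter word, 1-based positions:
returns the stack of positions of currently unmatched `2`'s together with the
list of bracketed pairs `(position of 2, position of 1)`. -/
def bracketFold (w : List ℕ) : List ℕ × List (ℕ × ℕ) :=
  (w.zipIdx.map (fun q => (q.2, q.1))).foldl (fun st p =>
    if p.2 = 2 then ((p.1 + 1) :: st.1, st.2)
    else
      match st.1 with
      | [] => st
      | j :: rest => (rest, (j, p.1 + 1) :: st.2)) ([], [])

/-- The rank `r(w)`: the number of bracketed `21`-pairs. -/
def rank (w : List ℕ) : ℕ := (bracketFold w).2.length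

/-- The set of paired (bracketed) 1-based positions of a two-letter word. -/
def pairedPositions (w : List ℕ) : Finset ℕ :=
  ((bracketFold w).2.map (fun p => p.1)).toFinset ∪
    ((bracketFold w).2.map (fun p => p.2)).toFinset

/-- The set of free (unbracketed) 1-based positions of a two-letter word. -/
def freePositions (w : List ℕ) : Finset ℕ :=
  (Finset.Icc 1 w.length) \ pairedPositions w

/-- The 1-based positions of the free `1`'s of a two-letter word. -/
def freeOnePositions (w : List ℕ) : Finset ℕ :=
  (freePositions w).filter (fun i => w.getD (i - 1) 0 = 1)

/-- The initial segment `[x]_n` of an infinite sequence, as a word. -/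
def pre (n : ℕ) (x : ℕ → ℕ) : List ℕ := (List.range n).map x

/-- A two–letter Bernoulli ensemble: coordinates are i.i.d. with
`P(1) = p₁`, `P(2) = p₂`. -/
def IsBernoulli2 (μ : Measure (ℕ → ℕ)) (p₁ p₂ : ℝ) : Prop :=
  IsProbabilityMeasure μ ∧
    iIndepFun (fun n (x : ℕ → ℕ) => x n) μ ∧
    (∀ n : ℕ, μ {x | x n = 1} = ENNReal.ofReal p₁) ∧
    (∀ n : ℕ, μ {x | x n = 2} = ENNReal.ofReal p₂) ∧
    p₁ + p₂ = 1

/-- A `k`-letter Bernoulli ensemble with letter probabilities `p 1 ≥ … ≥ p k`. -/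
def IsBernoulliK (μ : Measure (ℕ → ℕ)) (k : ℕ) (p : ℕ → ℝ) : Prop :=
  IsProbabilityMeasure μ ∧
    iIndepFun (fun n (x : ℕ → ℕ) => x n) μ ∧
    (∀ n i : ℕ, μ {x | x n = i} = ENNReal.ofReal (p i)) ∧
    (∀ i : ℕ, i < 1 ∨ k < i → p i = 0) ∧
    (∀ i : ℕ, 1 ≤ i → i < k → p (i + 1) ≤ p i) ∧
    0 < p k ∧ (∑ i ∈ Finset.Icc 1 k, p i) = 1

end RSKpaper

open Filter Set Topology
open scoped ENNReal NNReal

theorem exists_mem_Icc_eq_of_abs_sub_le_one {S : ℕ → ℤ} (hS : ∀ k, |S (k + 1) - S k| ≤ 1)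
    {a b : ℕ} (hab : a ≤ b) {c : ℤ} (ha : S a ≤ c) (hb : c ≤ S b) : ∃ n ∈ Icc a b, S n = c := by
  induction b, hab using Nat.le_induction with
  | base => exact ⟨a, left_mem_Icc.2 le_rfl, le_antisymm ha hb⟩
  | succ b hab ih =>
    by_cases hcb : c ≤ S b
    · obtain ⟨n, hn, rfl⟩ := ih hcb
      exact ⟨n, ⟨hn.1, hn.2.trans b.le_succ⟩, rfl⟩
    · have := abs_le.1 (hS b)
      exact ⟨b + 1, ⟨hab.trans b.le_succ, le_rfl⟩, by omega⟩

theorem frequently_eq_of_not_bddAbove_of_not_bddBelow {S : ℕ → ℤ}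
    (hS : ∀ k, |S (k + 1) - S k| ≤ 1) (hup : ¬BddAbove (range S)) (hdown : ¬BddBelow (range S))
    (c : ℤ) : ∃ᶠ n in atTop, S n = c := by
  have hS' : ∀ k, |-S (k + 1) - -S k| ≤ 1 := fun k => by
    rw [neg_sub_neg, abs_sub_comm]
    exact hS k
  have hlarge : ∃ᶠ n in atTop, c ≤ S n := by
    by_contra h
    exact hup (isBoundedUnder_of_eventually_le (a := c)
      ((not_frequently.1 h).mono fun n hn => (not_le.1 hn).le)).bddAbove_range
  have hsmall : ∃ᶠ n in atTop, S n ≤ c := by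
    by_contra h
    exact hdown (isBoundedUnder_of_eventually_ge (a := c)
      ((not_frequently.1 h).mono fun n hn => (not_le.1 hn).le)).bddBelow_range
  refine frequently_atTop.2 fun N => ?_
  rcases le_total (S N) c with hN | hN
  · obtain ⟨b, hNb, hb⟩ := frequently_atTop.1 hlarge N
    obtain ⟨n, hn, hSn⟩ := exists_mem_Icc_eq_of_abs_sub_le_one hS hNb hN hb
    exact ⟨n, hn.1, hSn⟩
  · obtain ⟨b, hNb, hb⟩ := frequently_atTop.1 hsmall N
    obtain ⟨n, hn, hSn⟩ := exists_mem_Icc_eq_of_abs_sub_le_one (S := fun n => -S n) hS' hNb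
      (neg_le_neg hN) (neg_le_neg hb)
    exact ⟨n, hn.1, neg_inj.1 hSn⟩

theorem not_tendsto_of_frequently_le_abs_sub {u : ℕ → ℝ} {ε : ℝ} (hε : 0 < ε)
    (hu : ∃ᶠ n in atTop, ε ≤ |u (n + 1) - u n|) (c : ℝ) : ¬Tendsto u atTop (𝓝 c) := by
  intro hc
  have hdiff : Tendsto (fun n => u (n + 1) - u n) atTop (𝓝 0) := by
    simpa using (hc.comp (tendsto_add_atTop_nat 1)).sub hc
  obtain ⟨n, hle, hlt⟩ := (hu.and_eventually (Metric.tendsto_nhds.1 hdiff ε hε)).exists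
  rw [Real.dist_0_eq_abs] at hlt
  exact hle.not_gt hlt

section Probability

variable {Ω : Type*} [MeasurableSpace Ω] {μ : Measure Ω}

theorem ae_mem_of_sum_measure_eq_one [IsProbabilityMeasure μ] {β : Type*} [MeasurableSpace β]
    [MeasurableSingletonClass β] {X : Ω → β} (hX : Measurable X) (s : Finset β)
    (hs : ∑ b ∈ s, μ {ω | X ω = b} = 1) : ∀ᵐ ω ∂μ, X ω ∈ s := by
  have hpre : μ (X ⁻¹' s) = 1 :=
    (sum_measure_preimage_singleton s fun b _ => hX (measurableSet_singleton b)).symm.trans hs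
  exact (ae_mem_iff_measure_eq (hX s.measurableSet).nullMeasurableSet).2
    (by rw [hpre, measure_univ])

theorem integral_intCast_eq_zero_of_ae_mem_of_measure_eq [IsFiniteMeasure μ] {X : Ω → ℤ}
    (hX : Measurable X) (hsupp : ∀ᵐ ω ∂μ, X ω ∈ ({1, -1, 0} : Finset ℤ))
    (hsymm : μ {ω | X ω = 1} = μ {ω | X ω = -1}) : ∫ ω, (X ω : ℝ) ∂μ = 0 := by
  have hone : MeasurableSet {ω | X ω = 1} := hX (measurableSet_singleton 1)
  have hneg : MeasurableSet {ω | X ω = -1} := hX (measurableSet_singleton (-1))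
  have hae : (fun ω => (X ω : ℝ)) =ᵐ[μ]
      {ω | X ω = 1}.indicator 1 - {ω | X ω = -1}.indicator 1 := by
    filter_upwards [hsupp] with ω hω
    simp only [Finset.mem_insert, Finset.mem_singleton] at hω
    rcases hω with h | h | h <;> simp [h, indicator]
  rw [integral_congr_ae hae, integral_sub' ((integrable_const 1).indicator hone)
    ((integrable_const 1).indicator hneg), integral_indicator_one hone,
    integral_indicator_one hneg, measureReal_def, measureReal_def, hsymm, sub_self]

theorem ProbabilityTheory.iIndepFun.ae_frequently_ne {β : Type*} [MeasurableSpace β]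
    [MeasurableSingletonClass β] {X : ℕ → Ω → β} (hX : ∀ n, Measurable (X n))
    (hind : iIndepFun X μ) {b : β} {r : ℝ≥0∞} (hr : r < 1) (hb : ∀ n, μ {ω | X n ω = b} ≤ r) :
    ∀ᵐ ω ∂μ, ∃ᶠ n in atTop, X n ω ≠ b := by
  have := hind.isProbabilityMeasure
  set s : ℕ → Set Ω := fun n => {ω | X n ω ≠ b}
  have hsm : ∀ n, MeasurableSet (s n) := fun n => hX n (measurableSet_singleton b).compl
  have hs : iIndepSet s μ := iIndep_comap_mem_iff.1 <| hind.comp (fun _ z => z ≠ b) fun _ =>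
    measurableSet_setOfPred.1 (measurableSet_singleton b).compl
  have hsum : ∑' n, μ (s n) = ∞ := by
    refine top_unique ((ENNReal.tsum_const_eq_top_of_ne_zero (tsub_pos_of_lt hr).ne').ge.trans
      (ENNReal.tsum_le_tsum fun n => ?_))
    have hbn : MeasurableSet {ω | X n ω = b} := hX n (measurableSet_singleton b)
    rw [show s n = {ω | X n ω = b}ᶜ from rfl, prob_compl_eq_one_sub hbn]
    exact tsub_le_tsub_left (hb n) 1
  have hlim : MeasurableSet (limsup s atTop) := .measurableSet_limsup hsm
  filter_upwards [(ae_mem_iff_measure_eq hlim.nullMeasurableSet).2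
    (by rw [measure_limsup_eq_one hsm hs hsum, measure_univ])] with ω hω
  exact mem_limsup_iff_frequently_mem.1 hω

theorem ProbabilityTheory.iIndepFun.martingale_sum_range_succ {X : ℕ → Ω → ℝ}
    (hX : ∀ n, StronglyMeasurable (X n)) (hind : iIndepFun X μ) (hint : ∀ n, Integrable (X n) μ)
    (hmean : ∀ n, μ[X n] = 0) :
    Martingale (fun n => ∑ i ∈ Finset.range (n + 1), X i) (Filtration.natural X hX) μ := by
  have := hind.isProbabilityMeasure
  refine martingale_of_condExp_sub_eq_zero_nat (fun n => ?_)
    (fun n => integrable_finsetSum' _ fun i _ => hint i) (fun n => ?_)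
  · refine Finset.stronglyMeasurable_sum _ fun i hi => ?_
    exact (Filtration.stronglyAdapted_natural hX i).mono
      (Filtration.mono _ (Finset.mem_range_succ_iff.1 hi))
  · rw [Finset.sum_range_succ_sub_sum]
    exact (hind.condExp_natural_ae_eq_of_lt hX n.lt_succ_self).trans (by simp only [hmean]; rfl)

theorem MeasureTheory.Martingale.ae_not_bddAbove_and_not_bddBelow [IsFiniteMeasure μ]
    {f : ℕ → Ω → ℝ} {ℱ : Filtration ℕ ‹_›} (hf : Martingale f ℱ μ) {R : ℝ≥0}
    (hbdd : ∀ᵐ ω ∂μ, ∀ i, |f (i + 1) ω - f i ω| ≤ R) {ε : ℝ} (hε : 0 < ε)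
    (hjump : ∀ᵐ ω ∂μ, ∃ᶠ n in atTop, ε ≤ |f (n + 1) ω - f n ω|) :
    ∀ᵐ ω ∂μ, ¬BddAbove (range fun n => f n ω) ∧ ¬BddBelow (range fun n => f n ω) := by
  filter_upwards [hf.bddAbove_range_iff_bddBelow_range hbdd,
    hf.submartingale.bddAbove_iff_exists_tendsto hbdd, hjump] with ω hiff hconv hω
  have hup : ¬BddAbove (range fun n => f n ω) := fun h =>
    let ⟨c, hc⟩ := hconv.1 h
    not_tendsto_of_frequently_le_abs_sub hε hω c hc
  exact ⟨hup, fun h => hup (hiff.2 h)⟩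

theorem ae_not_bddAbove_and_not_bddBelow_sum_range {ξ : ℕ → Ω → ℤ} (hξ : ∀ n, Measurable (ξ n))
    (hind : iIndepFun ξ μ) (hstep : ∀ᵐ ω ∂μ, ∀ n, |ξ n ω| ≤ 1)
    (hmean : ∀ n, ∫ ω, (ξ n ω : ℝ) ∂μ = 0) (hmove : ∀ᵐ ω ∂μ, ∃ᶠ n in atTop, ξ n ω ≠ 0) :
    ∀ᵐ ω ∂μ, ¬BddAbove (range fun n => ∑ i ∈ Finset.range n, ξ i ω) ∧
      ¬BddBelow (range fun n => ∑ i ∈ Finset.range n, ξ i ω) := by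
  have := hind.isProbabilityMeasure
  set X : ℕ → Ω → ℝ := fun n ω => ξ n ω
  have hX : ∀ n, StronglyMeasurable (X n) := fun n =>
    ((measurable_of_countable _).comp (hξ n)).stronglyMeasurable
  have hXbdd : ∀ᵐ ω ∂μ, ∀ n, |X n ω| ≤ 1 := by
    filter_upwards [hstep] with ω hω n
    show |(ξ n ω : ℝ)| ≤ 1
    exact_mod_cast hω n
  have hint : ∀ n, Integrable (X n) μ := fun n =>
    .of_bound (hX n).aestronglyMeasurable 1 (by filter_upwards [hXbdd] with ω hω using hω n)
  set M := fun n => ∑ i ∈ Finset.range (n + 1), X i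
  have hM : Martingale M (Filtration.natural X hX) μ :=
    (hind.comp (fun _ z => (z : ℝ)) fun _ => measurable_of_countable _).martingale_sum_range_succ
      hX hint hmean
  have hincr : ∀ n ω, M (n + 1) ω - M n ω = X (n + 1) ω := fun n ω => by
    simp [M, Finset.sum_range_succ]
  have hMbdd : ∀ᵐ ω ∂μ, ∀ n, |M (n + 1) ω - M n ω| ≤ ((1 : ℝ≥0) : ℝ) := by
    filter_upwards [hXbdd] with ω hω n
    simpa [hincr] using hω (n + 1)
  have hjump : ∀ᵐ ω ∂μ, ∃ᶠ n in atTop, 1 ≤ |M (n + 1) ω - M n ω| := by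
    filter_upwards [hmove] with ω hω
    rw [← map_add_atTop_eq_nat 1, frequently_map] at hω
    refine hω.mono fun n hn => ?_
    rw [hincr]
    show 1 ≤ |(ξ (n + 1) ω : ℝ)|
    exact_mod_cast Int.one_le_abs hn
  filter_upwards [hM.ae_not_bddAbove_and_not_bddBelow hMbdd one_pos hjump] with ω ⟨hup, hdown⟩
  have hMS : ∀ n, M n ω = ((∑ i ∈ Finset.range (n + 1), ξ i ω : ℤ) : ℝ) := fun n => by
    simp [M, X]
  refine ⟨fun ⟨B, hB⟩ => hup ⟨B, ?_⟩, fun ⟨B, hB⟩ => hdown ⟨B, ?_⟩⟩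
  · rintro _ ⟨n, rfl⟩
    exact (hMS n).trans_le (Int.cast_le.2 (hB ⟨n + 1, rfl⟩))
  · rintro _ ⟨n, rfl⟩
    exact (Int.cast_le.2 (hB ⟨n + 1, rfl⟩)).trans_eq (hMS n).symm

theorem ae_frequently_sum_range_eq {ξ : ℕ → Ω → ℤ} (hξ : ∀ n, Measurable (ξ n))
    (hind : iIndepFun ξ μ) (hstep : ∀ᵐ ω ∂μ, ∀ n, |ξ n ω| ≤ 1)
    (hmean : ∀ n, ∫ ω, (ξ n ω : ℝ) ∂μ = 0) (hmove : ∀ᵐ ω ∂μ, ∃ᶠ n in atTop, ξ n ω ≠ 0) :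
    ∀ᵐ ω ∂μ, ∀ c : ℤ, ∃ᶠ n in atTop, ∑ i ∈ Finset.range n, ξ i ω = c := by
  filter_upwards [hstep, ae_not_bddAbove_and_not_bddBelow_sum_range hξ hind hstep hmean hmove]
    with ω hω ⟨hup, hdown⟩ c
  refine frequently_eq_of_not_bddAbove_of_not_bddBelow (fun k => ?_) hup hdown c
  simpa [Finset.sum_range_succ] using hω k

end Probability

namespace RSKpaper

/-- the lazy symmetric random walk on `ℤ` with step distribution
`+1, -1, 0` with probabilities `p, p, 1 - 2p` (`0 < p ≤ 1/2`) is recurrent, and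
started from any `m ≥ 0` it reaches `0` almost surely. -/
theorem lazy_symmetric_walk_recurrent {Ω : Type*} [MeasurableSpace Ω]
    (μ : Measure Ω) [IsProbabilityMeasure μ] (p : ℝ) (hp : 0 < p)
    (hp2 : p ≤ 1 / 2) (ξ : ℕ → Ω → ℤ) (hmeas : ∀ n, Measurable (ξ n))
    (hindep : iIndepFun ξ μ)
    (h1 : ∀ n, μ {ω | ξ n ω = 1} = ENNReal.ofReal p)
    (hm1 : ∀ n, μ {ω | ξ n ω = -1} = ENNReal.ofReal p)
    (h0 : ∀ n, μ {ω | ξ n ω = 0} = ENNReal.ofReal (1 - 2 * p)) :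
    (∀ᵐ ω ∂μ, ∀ N : ℕ, ∃ n, N ≤ n ∧ 1 ≤ n ∧
        (∑ i ∈ Finset.range n, ξ i ω) = 0) ∧
    (∀ m : ℤ, 0 ≤ m →
      ∀ᵐ ω ∂μ, ∃ n : ℕ, m + ∑ i ∈ Finset.range n, ξ i ω = 0) := by
  have hsupp : ∀ n, ∀ᵐ ω ∂μ, ξ n ω ∈ ({1, -1, 0} : Finset ℤ) := fun n => by
    refine ae_mem_of_sum_measure_eq_one (hmeas n) _ ?_
    rw [Finset.sum_insert (by decide), Finset.sum_insert (by decide), Finset.sum_singleton, h1,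
      hm1, h0, ← ENNReal.ofReal_add hp.le (by linarith), ← ENNReal.ofReal_add hp.le (by linarith)]
    convert ENNReal.ofReal_one using 2
    ring
  have hstep : ∀ᵐ ω ∂μ, ∀ n, |ξ n ω| ≤ 1 := ae_all_iff.2 fun n => (hsupp n).mono fun ω hω => by
    simp only [Finset.mem_insert, Finset.mem_singleton] at hω
    rcases hω with h | h | h <;> simp [h]
  have hmean : ∀ n, ∫ ω, (ξ n ω : ℝ) ∂μ = 0 := fun n =>
    integral_intCast_eq_zero_of_ae_mem_of_measure_eq (hmeas n) (hsupp n) ((h1 n).trans (hm1 n).symm)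
  have hmove : ∀ᵐ ω ∂μ, ∃ᶠ n in atTop, ξ n ω ≠ 0 :=
    hindep.ae_frequently_ne hmeas (ENNReal.ofReal_lt_one.2 (by linarith)) fun n => (h0 n).le
  have hrec := ae_frequently_sum_range_eq hmeas hindep hstep hmean hmove
  refine ⟨?_, fun m _ => ?_⟩
  · filter_upwards [hrec] with ω hω N
    obtain ⟨n, hn, hsum⟩ := frequently_atTop.1 (hω 0) (max N 1)
    exact ⟨n, le_of_max_le_left hn, le_of_max_le_right hn, hsum⟩
  · filter_upwards [hrec] with ω hω
    obtain ⟨n, hn⟩ := (hω (-m)).exists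
    exact ⟨n, by rw [hn, add_neg_cancel]⟩

end RSKpaper
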